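/- For 1 ≤ r ≤ n, the exterior power Λ^{r−1}(Aug(ℂ^n)) is a simple ℂ[T_n]-module. -/

import Mathlib

open Finset in
/-- The natural representation of the full transformation monoid `Function.End (Fin n)`
on `ℂ^n`, determined by `f · v_i = v_{f i}` on the standard basis. -/
noncomputable def natRep (n : ℕ) :
    Representation ℂ (Function.End (Fin n)) (Fin n → ℂ) where
  toFun f :=
    { toFun := fun x j => ∑ i, if f i = j then x i else 0
      map_add' := by
        intro x y
        funext j
        simp only [Pi.add_apply]
        rw [← Finset.sum_add_distrib]
        congr 1; funext i; split <;> simp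
      map_smul' := by
        intro c x
        funext j
        simp [Finset.mul_sum, apply_ite (fun t => c * t)] }
  map_one' := by
    refine LinearMap.ext fun x => funext fun j => ?_
    show (∑ i, if (1 : Function.End (Fin n)) i = j then x i else 0) = x j
    have h : ∀ i : Fin n, (1 : Function.End (Fin n)) i = i := fun _ => rfl
    simp only [h]
    rw [Finset.sum_ite_eq' Finset.univ j x]
    simp
  map_mul' := by
    intro f g
    refine LinearMap.ext fun x => funext fun j => ?_
    show (∑ i, if f (g i) = j then x i else 0)
        = ∑ k, if f k = j then ∑ i, if g i = k then x i else 0 else 0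
    have key : ∀ k, (if f k = j then ∑ i, if g i = k then x i else 0 else 0)
        = ∑ i, if g i = k then (if f k = j then x i else 0) else 0 := by
      intro k; split
      · rfl
      · simp
    rw [Finset.sum_congr rfl (fun k _ => key k), Finset.sum_comm]
    refine Finset.sum_congr rfl fun i _ => ?_
    rw [Finset.sum_ite_eq Finset.univ (g i) (fun k => if f k = j then x i else 0)]
    simp

lemma sum_natRep (n : ℕ) (f : Function.End (Fin n)) (x : Fin n → ℂ) :
    ∑ j, natRep n f x j = ∑ i, x i := by
  show ∑ j, ∑ i, (if f i = j then x i else 0) = _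
  rw [Finset.sum_comm]
  simp [Finset.sum_ite_eq' Finset.univ]

/-- The augmentation submodule `Aug(ℂ^n)` of the natural module: vectors whose
coordinates sum to zero. -/
noncomputable def Aug (n : ℕ) : Submodule ℂ (Fin n → ℂ) where
  carrier := {x | ∑ i, x i = 0}
  add_mem' := by intro a b ha hb; simp_all [Finset.sum_add_distrib]
  zero_mem' := by simp
  smul_mem' := by intro c a ha; simp_all [← Finset.mul_sum]

lemma natRep_mem_aug (n : ℕ) (f : Function.End (Fin n)) {x : Fin n → ℂ}
    (hx : x ∈ Aug n) : natRep n f x ∈ Aug n := by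
  have : ∑ j, natRep n f x j = 0 := by rw [sum_natRep]; exact hx
  exact this

/-- The representation of the full transformation monoid on the augmentation submodule. -/
noncomputable def augRep (n : ℕ) : Representation ℂ (Function.End (Fin n)) (Aug n) where
  toFun f := (natRep n f).restrict (p := Aug n) (q := Aug n) (fun _ hx => natRep_mem_aug n f hx)
  map_one' := by
    refine LinearMap.ext fun x => Subtype.ext ?_
    simp [LinearMap.restrict_apply]
  map_mul' := by
    intro f g
    refine LinearMap.ext fun x => Subtype.ext ?_
    simp [LinearMap.restrict_apply]

lemma extAlg_map_mem {R M N : Type} [CommRing R] [AddCommGroup M] [Module R M]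
    [AddCommGroup N] [Module R N] (r : ℕ) (f : M →ₗ[R] N) {x : ExteriorAlgebra R M}
    (hx : x ∈ ⋀[R]^r M) : ExteriorAlgebra.map f x ∈ ⋀[R]^r N := by
  rw [← ExteriorAlgebra.ιMulti_span_fixedDegree] at hx ⊢
  induction hx using Submodule.span_induction with
  | mem y hy =>
      obtain ⟨v, rfl⟩ := hy
      rw [ExteriorAlgebra.map_apply_ιMulti]
      exact Submodule.subset_span ⟨f ∘ v, rfl⟩
  | zero => simp
  | add y z _ _ hy hz => rw [map_add]; exact Submodule.add_mem _ hy hz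
  | smul c y _ hy => rw [map_smul]; exact Submodule.smul_mem _ c hy

/-- The linear map between `r`-th exterior powers induced by a linear map. -/
noncomputable def extMap {R M N : Type} [CommRing R] [AddCommGroup M] [Module R M]
    [AddCommGroup N] [Module R N] (r : ℕ) (f : M →ₗ[R] N) :
    ⋀[R]^r M →ₗ[R] ⋀[R]^r N :=
  (ExteriorAlgebra.map f).toLinearMap.restrict (p := ⋀[R]^r M) (q := ⋀[R]^r N)
    (fun _ hx => extAlg_map_mem r f hx)

/-- The representation of the full transformation monoid on the `r`-th exterior power
of the natural module, by the diagonal action on wedge products. -/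
noncomputable def extRep (n r : ℕ) :
    Representation ℂ (Function.End (Fin n)) (⋀[ℂ]^r (Fin n → ℂ)) where
  toFun f := extMap r (natRep n f)
  map_one' := by
    refine LinearMap.ext fun x => Subtype.ext ?_
    simp [extMap, LinearMap.restrict_apply, map_one, Module.End.one_eq_id,
      ExteriorAlgebra.map_id]
  map_mul' := by
    intro f g
    refine LinearMap.ext fun x => Subtype.ext ?_
    simp only [extMap, LinearMap.restrict_apply, map_mul, Module.End.mul_eq_comp,
      ← ExteriorAlgebra.map_comp_map]
    rfl

set_option synthInstance.maxHeartbeats 1000000 in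
/-- The representation of the full transformation monoid on the `r`-th exterior power
of the augmentation submodule. -/
noncomputable def extAugRep (n r : ℕ) :
    Representation ℂ (Function.End (Fin n)) (⋀[ℂ]^r ↥(Aug n)) where
  toFun f := extMap r (augRep n f)
  map_one' := by
    refine LinearMap.ext fun x => Subtype.ext ?_
    simp [extMap, LinearMap.restrict_apply, map_one, Module.End.one_eq_id,
      ExteriorAlgebra.map_id]
  map_mul' := by
    intro f g
    refine LinearMap.ext fun x => Subtype.ext ?_
    simp only [extMap, LinearMap.restrict_apply, map_mul, Module.End.mul_eq_comp,
      ← ExteriorAlgebra.map_comp_map]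
    rfl

/-- The idempotent `e_m ∈ T_n` fixing the first `m` points and sending all other
points to the first point. -/
def eIdem (n m : ℕ) : Function.End (Fin n) :=
  fun i => if h : (i : ℕ) < m then i else ⟨0, i.pos⟩

/-- The embedding of the symmetric group `S_r` into `T_n` as the maximal subgroup
at the idempotent `eIdem n r` (elements `g` with `e g e = g` invertible in `e T_n e`). -/
def permEmbed (n r : ℕ) (hr : 1 ≤ r) (hrn : r ≤ n) (σ : Equiv.Perm (Fin r)) :
    Function.End (Fin n) :=
  fun i => Fin.castLE hrn (σ (if hi : (i : ℕ) < r then ⟨i, hi⟩ else ⟨0, hr⟩))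

/-- The idempotent `η = (1/r!) ∑_{g ∈ G} sgn(g|_{[r]}) g` of the monoid algebra,
where `G ≅ S_r` is the maximal subgroup at `eIdem n r`. -/
noncomputable def eta (n r : ℕ) (hr : 1 ≤ r) (hrn : r ≤ n) :
    MonoidAlgebra ℂ (Function.End (Fin n)) :=
  (r.factorial : ℂ)⁻¹ • ∑ σ : Equiv.Perm (Fin r),
    MonoidAlgebra.single (permEmbed n r hr hrn σ) ((Equiv.Perm.sign σ : ℤ) : ℂ)

/-- A permutation of `Fin m`, viewed as an element of the transformation monoid. -/
def permToEnd (m : ℕ) : Equiv.Perm (Fin m) →* Function.End (Fin m) where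
  toFun σ := ⇑σ
  map_one' := rfl
  map_mul' := fun _ _ => rfl

/-- The wedge product of a family of `r` vectors, as an element of the `r`-th
exterior power. -/
noncomputable def wedge {M : Type} [AddCommGroup M] [Module ℂ M] (r : ℕ) (v : Fin r → M) :
    ⋀[ℂ]^r M :=
  ⟨ExteriorAlgebra.ιMulti ℂ r v, ExteriorAlgebra.ιMulti_range ℂ r ⟨v, rfl⟩⟩

/-- The basis `w_1, …, w_n` of `ℂ^n`: `w_i = v_i - v_n` for `i < n` and
`w_n = v_1 + ⋯ + v_n`. -/
noncomputable def wBasis (n : ℕ) : Fin n → (Fin n → ℂ) :=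
  fun i => if h : (i : ℕ) < n - 1
    then Pi.single i 1 - Pi.single (⟨n - 1, by omega⟩ : Fin n) 1
    else ∑ j, Pi.single j 1

lemma wBasis_mem_aug (n : ℕ) (i : Fin n) (h : (i : ℕ) < n - 1) : wBasis n i ∈ Aug n := by
  show ∑ j, wBasis n i j = 0
  simp [wBasis, h, Finset.sum_sub_distrib, Finset.sum_pi_single]

/-- The vectors `w_i = v_i - v_n` (for `i < n`) as elements of the augmentation
submodule; junk value `0` otherwise. -/
noncomputable def wAug (n : ℕ) : Fin n → ↥(Aug n) :=
  fun i => if h : (i : ℕ) < n - 1 then ⟨wBasis n i, wBasis_mem_aug n i h⟩ else 0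

/-- The trivial representation of the full transformation monoid on `ℂ`. -/
noncomputable def trivRep (n : ℕ) : Representation ℂ (Function.End (Fin n)) ℂ := 1

/-- `projDimLE R M k` : the `R`-module `M` admits a projective resolution of length
at most `k`, i.e. has projective dimension at most `k`. -/
def projDimLE (R : Type) [Ring R] (M : Type) [AddCommMonoid M] [Module R M] (k : ℕ) : Prop :=
  ∃ (P : ℕ → ModuleCat.{0} R) (d : (i : ℕ) → (P (i + 1) →ₗ[R] P i)) (π : P 0 →ₗ[R] M),
    (∀ i, Module.Projective R (P i)) ∧
    Function.Surjective π ∧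
    LinearMap.ker π = LinearMap.range (d 0) ∧
    (∀ i, LinearMap.ker (d i) = LinearMap.range (d (i + 1))) ∧
    (∀ i, k < i → Subsingleton (P i))

/-- The sign character of `S_n`, extended by zero to all of `T_n`. -/
noncomputable def sgnExt (n : ℕ) (f : Function.End (Fin n)) : ℂ :=
  haveI : Decidable (Function.Bijective f) := Fintype.decidableBijectiveFintype f
  if h : Function.Bijective f then ((Equiv.Perm.sign (Equiv.ofBijective f h) : ℤ) : ℂ) else 0

/-! Let `k = r - 1`. The vectors `v_i - v_last` (`i < n - 1`) form a basis of `Aug(ℂⁿ)`, so the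
ordered wedges `w_S` over `k`-subsets `S` of them form a basis of `Λᵏ`. Given `k`-subsets `S` and `T`, let `f`
send the `j`-th element of `S` to the `j`-th element of `T` and every other point to the last one.
Since `f` fixes the last point it sends `v_i - v_last` to `v_{f i} - v_last`, which vanishes when
`f i` is the last point; hence `f • w_S = w_T`, and for `T = S` the map `f` is the projection onto
the line through `w_S` along the other basis vectors. A nonzero subrepresentation therefore
contains some `w_S`, hence every `w_T`. -/

open Function exteriorPower

theorem Representation.isIrreducible_of_basis {k G V ι : Type*} [Field k] [Monoid G]
    [AddCommGroup V] [Module k V] [Nonempty ι] (ρ : Representation k G V)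
    (B : Module.Basis ι k V) (hproj : ∀ s, ∃ g, ∀ x, ρ g x = B.repr x s • B s)
    (htrans : ∀ s t, ∃ g, ρ g (B s) = B t) : ρ.IsIrreducible := by
  have eq_top_of_basis_mem : ∀ W : Subrepresentation ρ, ∀ s, B s ∈ W → W = ⊤ := by
    intro W s hs
    refine Subrepresentation.toSubmodule_injective (eq_top_iff.2 ?_)
    rw [← B.span_eq, Submodule.span_le]
    rintro _ ⟨t, rfl⟩
    obtain ⟨g, hg⟩ := htrans s t
    exact hg ▸ W.apply_mem_toSubmodule g hs
  obtain ⟨s₀⟩ := ‹Nonempty ι›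
  have : Nontrivial (Subrepresentation ρ) := by
    refine ⟨⊥, ⊤, fun h => B.ne_zero s₀ ((Submodule.mem_bot k).1 ?_)⟩
    have : B s₀ ∈ (⊤ : Subrepresentation ρ) := Submodule.mem_top
    rwa [← h] at this
  refine ⟨fun W => or_iff_not_imp_left.2 fun hW => ?_⟩
  obtain ⟨x, hxW, hx⟩ := W.toSubmodule.exists_mem_ne_zero_of_ne_bot
    (fun h => hW (Subrepresentation.toSubmodule_injective h))
  obtain ⟨s, hs⟩ := Finsupp.ne_iff.1 (B.repr.map_ne_zero_iff.2 hx)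
  obtain ⟨g, hg⟩ := hproj s
  have := W.apply_mem_toSubmodule g hxW
  rw [hg] at this
  exact eq_top_of_basis_mem W s ((W.toSubmodule.smul_mem_iff hs).1 this)

lemma extMap_ιMulti {R M N : Type} [CommRing R] [AddCommGroup M] [Module R M]
    [AddCommGroup N] [Module R N] (r : ℕ) (f : M →ₗ[R] N) (v : Fin r → M) :
    extMap r f (ιMulti R r v) = ιMulti R r (f ∘ v) :=
  Subtype.ext (ExteriorAlgebra.map_apply_ιMulti f v)

lemma extAugRep_ιMulti {k : ℕ} (n : ℕ) (f : Function.End (Fin n)) (v : Fin k → Aug n) :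
    extAugRep n k f (ιMulti ℂ k v) = ιMulti ℂ k (augRep n f ∘ v) :=
  extMap_ιMulti k (augRep n f) v

lemma natRep_single (n : ℕ) (f : Function.End (Fin n)) (p : Fin n) :
    natRep n f (Pi.single p 1) = Pi.single (f p) 1 := by
  funext j
  show ∑ i, (if f i = j then (Pi.single p 1 : Fin n → ℂ) i else 0) = _
  refine (Finset.sum_eq_single p (fun i _ hi => by simp [hi]) (by simp)).trans ?_
  simp [Pi.single_apply, eq_comm]

lemma mem_aug_iff {n : ℕ} {x : Fin n → ℂ} : x ∈ Aug n ↔ ∑ i, x i = 0 :=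
  Iff.rfl

noncomputable def augVec (m : ℕ) (p : Fin (m + 1)) : Aug (m + 1) :=
  ⟨Pi.single p 1 - Pi.single (Fin.last m) 1, mem_aug_iff.2 <| by simp [Finset.sum_sub_distrib]⟩

@[simp]
lemma augVec_last (m : ℕ) : augVec m (Fin.last m) = 0 :=
  Subtype.ext (sub_self _)

lemma augRep_augVec {m : ℕ} {f : Function.End (Fin (m + 1))} (hf : f (Fin.last m) = Fin.last m)
    (p : Fin (m + 1)) : augRep (m + 1) f (augVec m p) = augVec m (f p) := by
  apply Subtype.ext
  show natRep (m + 1) f (Pi.single p 1 - Pi.single (Fin.last m) 1) = _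
  rw [map_sub, natRep_single, natRep_single, hf]
  rfl

noncomputable def augEquivFun (m : ℕ) : Aug (m + 1) ≃ₗ[ℂ] (Fin m → ℂ) where
  toFun x i := (x : Fin (m + 1) → ℂ) i.castSucc
  map_add' _ _ := rfl
  map_smul' _ _ := rfl
  invFun c := ⟨Fin.snoc c (-∑ i, c i), mem_aug_iff.2 <| by simp [Fin.sum_univ_castSucc]⟩
  left_inv x := by
    apply Subtype.ext
    have hx := mem_aug_iff.1 x.2
    rw [Fin.sum_univ_castSucc] at hx
    funext p
    refine Fin.lastCases ?_ (fun i => ?_) p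
    · simp only [Fin.snoc_last]
      linear_combination -hx
    · simp
  right_inv c := by
    funext i
    simp

noncomputable def augBasis (m : ℕ) : Module.Basis (Fin m) ℂ (Aug (m + 1)) :=
  .ofEquivFun (augEquivFun m)

lemma augBasis_apply (m : ℕ) (i : Fin m) : augBasis m i = augVec m i.castSucc := by
  apply (augEquivFun m).injective
  rw [augBasis, Module.Basis.coe_ofEquivFun, LinearEquiv.apply_symm_apply]
  funext j
  simp [augEquivFun, augVec, Pi.single_apply]

section Transfer

open Set.powersetCard

variable {m k : ℕ}

noncomputable def transfer (s t : Fin k → Fin m) : Function.End (Fin (m + 1)) :=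
  extend (Fin.castSucc ∘ s) (Fin.castSucc ∘ t) fun _ => Fin.last m

lemma transfer_last (s t : Fin k → Fin m) : transfer s t (Fin.last m) = Fin.last m :=
  extend_apply' _ _ _ fun ⟨j, hj⟩ => Fin.castSucc_ne_last (s j) hj

lemma transfer_castSucc_apply {s : Fin k → Fin m} (hs : Injective s) (t : Fin k → Fin m)
    (j : Fin k) : transfer s t (s j).castSucc = (t j).castSucc :=
  ((Fin.castSucc_injective m).comp hs).extend_apply _ _ j

lemma transfer_castSucc_of_notMem_range {s : Fin k → Fin m} (t : Fin k → Fin m) {i : Fin m}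
    (hi : i ∉ Set.range s) : transfer s t i.castSucc = Fin.last m :=
  extend_apply' _ _ _ fun ⟨j, hj⟩ => hi ⟨j, Fin.castSucc_injective m hj⟩

lemma extAugRep_transfer_ιMulti {s : Fin k → Fin m} (hs : Injective s) (t : Fin k → Fin m) :
    extAugRep (m + 1) k (transfer s t) (ιMulti ℂ k (augBasis m ∘ s))
      = ιMulti ℂ k (augBasis m ∘ t) := by
  rw [extAugRep_ιMulti]
  congr 1
  funext j
  simp [augBasis_apply, augRep_augVec (transfer_last s t), transfer_castSucc_apply hs]

lemma extAugRep_transfer_ιMulti_eq_zero (s t : Fin k → Fin m) {v : Fin k → Fin m} {j : Fin k}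
    (hj : v j ∉ Set.range s) :
    extAugRep (m + 1) k (transfer s t) (ιMulti ℂ k (augBasis m ∘ v)) = 0 := by
  rw [extAugRep_ιMulti]
  refine AlternatingMap.map_coord_zero _ j ?_
  simp [augBasis_apply, augRep_augVec (transfer_last s t), transfer_castSucc_of_notMem_range t hj]

lemma extAugRep_transfer_basis (S T : Set.powersetCard (Fin m) k) :
    extAugRep (m + 1) k (transfer (ofFinEmbEquiv.symm S) (ofFinEmbEquiv.symm T))
      ((augBasis m).exteriorPower k S) = (augBasis m).exteriorPower k T := by
  simp only [exteriorPower.basis_apply]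
  exact extAugRep_transfer_ιMulti (ofFinEmbEquiv.symm S).injective _

lemma extAugRep_transfer_self (S : Set.powersetCard (Fin m) k) (x : ⋀[ℂ]^k (Aug (m + 1))) :
    extAugRep (m + 1) k (transfer (ofFinEmbEquiv.symm S) (ofFinEmbEquiv.symm S)) x
      = ((augBasis m).exteriorPower k).repr x S • (augBasis m).exteriorPower k S := by
  set B := (augBasis m).exteriorPower k
  suffices extAugRep (m + 1) k (transfer (ofFinEmbEquiv.symm S) (ofFinEmbEquiv.symm S))
      = (B.coord S).smulRight (B S) from LinearMap.congr_fun this x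
  refine B.ext fun T => ?_
  rw [LinearMap.smulRight_apply, B.coord_apply, B.repr_self]
  rcases eq_or_ne T S with rfl | hTS
  · rw [Finsupp.single_eq_same, one_smul, extAugRep_transfer_basis]
  · obtain ⟨a, haT, haS⟩ := (exists_mem_notMem_iff_ne T S).1 hTS
    obtain ⟨j, rfl⟩ := (mem_range_ofFinEmbEquiv_symm_iff_mem T a).2 haT
    rw [Finsupp.single_eq_of_ne hTS.symm, zero_smul, exteriorPower.basis_apply]
    exact extAugRep_transfer_ιMulti_eq_zero _ _
      ((mem_range_ofFinEmbEquiv_symm_iff_mem S _).not.2 haS)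

theorem extAugRep_isIrreducible (hk : k ≤ m) : (extAugRep (m + 1) k).IsIrreducible :=
  haveI : Nonempty (Set.powersetCard (Fin m) k) := ⟨ofFinEmbEquiv (Fin.castLEOrderEmb hk)⟩
  (extAugRep (m + 1) k).isIrreducible_of_basis ((augBasis m).exteriorPower k)
    (fun S => ⟨_, extAugRep_transfer_self S⟩) (fun S T => ⟨_, extAugRep_transfer_basis S T⟩)

end Transfer

/-- For `1 ≤ r ≤ n`, the exterior power `Λ^{r−1}(Aug(ℂ^n))` is a simple
`ℂ[T_n]`-module. -/
theorem exteriorPower_aug_simple (n r : ℕ) (hr : 1 ≤ r) (hrn : r ≤ n) :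
    IsSimpleModule (MonoidAlgebra ℂ (Function.End (Fin n))) ((extAugRep n (r-1)).asModule) := by
  obtain ⟨m, rfl⟩ : ∃ m, n = m + 1 := ⟨n - 1, by omega⟩
  exact (Representation.irreducible_iff_isSimpleModule_asModule _).1
    (extAugRep_isIrreducible (by omega))
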